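/- With notation as in the main theorem, for t ∈ (0,π], r ≥ 1/2, and a.e. τ: |K_F(t+τ,τ)·P(r,t)/(1−r)| ≤ (π‖F'‖_∞²/2)·(1/t²)·∫₀ᵗ ω(‖F'‖_∞ u) du, and this dominating function Q(t) = (π‖F'‖_∞²/2)·t^{−2}∫₀ᵗ ω(‖F'‖_∞ u) du satisfies ∫₀^π Q(t) dt < ∞ when ω is Dini integrable. -/

import Mathlib

open MeasureTheory Set Complex Real
open scoped ComplexConjugate

/-! Since 1 - 2 r cos t + r² ≥ 2 r (1 - cos t) ≥ 4 r t² / π², the Poisson factor `P(r,t)/(1-r)` is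
at most `π / (2 t²)`. In the kernel factor, `Re (conj (g s - g σ) * (I * g' σ))` does not change
when `g s - g σ` is replaced by the first-order remainder `g s - g σ - (s - σ) g' σ`, whose norm is
at most `∫₀^{s-σ} ω`; here `s - σ = f (t + τ) - f τ ≤ L t`. Finally `∫₀ᵗ ω (L u) du ≤ t ω (L t)`,
so the dominating function is at most a multiple of `ω (L t) / t`, integrable by the Dini
condition. -/

theorem abs_poisson_div_one_sub_le {t r : ℝ} (ht0 : 0 < t) (htπ : t ≤ π) (hr : 1 / 2 ≤ r)
    (hr1 : r < 1) :
    |((1 - r ^ 2) / (2 * π * (1 - 2 * r * Real.cos t + r ^ 2))) / (1 - r)| ≤ π / (2 * t ^ 2) := by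
  have hπ := Real.pi_pos
  have hcos : 2 * t ^ 2 ≤ π ^ 2 * (1 - Real.cos t) := by
    have h := Real.cos_le_one_sub_mul_cos_sq (by rwa [abs_of_pos ht0] : |t| ≤ π)
    have h' := mul_le_mul_of_nonneg_left h (sq_nonneg π)
    rw [mul_sub, ← mul_assoc, mul_div_cancel₀ _ (by positivity)] at h'
    linarith
  have hD : 2 * t ^ 2 ≤ π ^ 2 * (1 - 2 * r * Real.cos t + r ^ 2) := by
    nlinarith [mul_le_mul_of_nonneg_left hcos (by linarith : (0 : ℝ) ≤ 2 * r),
      mul_nonneg (sq_nonneg π) (sq_nonneg (1 - r)), pow_pos ht0 2]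
  have hDpos : 0 < 1 - 2 * r * Real.cos t + r ^ 2 := by
    by_contra! h
    nlinarith [mul_le_mul_of_nonneg_left h (sq_nonneg π), pow_pos ht0 2]
  rw [div_div, show (1 - r ^ 2) = (1 - r) * (1 + r) by ring, mul_comm (2 * π * _),
    mul_div_mul_left _ _ (by linarith), abs_of_nonneg (by positivity),
    div_le_div_iff₀ (by positivity) (by positivity)]
  nlinarith [pow_pos ht0 2]

theorem norm_sub_sub_smul_le_integral {E : Type*} [NormedAddCommGroup E] [NormedSpace ℝ E]
    [CompleteSpace E] {γ γ' : ℝ → E} {φ : ℝ → ℝ} {a b : ℝ} (hab : a ≤ b)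
    (hγ : ∀ u ∈ Icc a b, HasDerivAt γ (γ' u) u) (hγ' : IntervalIntegrable γ' volume a b)
    (hφ : IntervalIntegrable φ volume 0 (b - a))
    (hmod : ∀ u ∈ Icc a b, ‖γ' u - γ' a‖ ≤ φ (u - a)) :
    ‖γ b - γ a - (b - a) • γ' a‖ ≤ ∫ u in 0..b - a, φ u := by
  have hftc : γ b - γ a - (b - a) • γ' a = ∫ u in a..b, (γ' u - γ' a) := by
    rw [intervalIntegral.integral_sub hγ' intervalIntegrable_const,
      intervalIntegral.integral_const,
      intervalIntegral.integral_eq_sub_of_hasDerivAt (by rwa [uIcc_of_le hab]) hγ']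
  have hφ' : IntervalIntegrable (fun u => φ (u - a)) volume a b := by
    simpa using hφ.comp_sub_right a
  calc ‖γ b - γ a - (b - a) • γ' a‖ ≤ ∫ u in a..b, φ (u - a) := by
        rw [hftc]
        exact intervalIntegral.norm_integral_le_of_norm_le hab
          (ae_of_all _ fun u hu => hmod u (Ioc_subset_Icc_self hu)) hφ'
    _ = ∫ u in 0..b - a, φ u := by rw [intervalIntegral.integral_comp_sub_right, sub_self]

theorem abs_re_conj_mul_I_mul_le (z w : ℂ) (x : ℝ) :
    |(conj z * (I * w)).re| ≤ ‖z - x • w‖ * ‖w‖ := by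
  have hshift : (conj z * (I * w)).re = (conj (z - x • w) * (I * w)).re := by
    simp only [mul_re, mul_im, map_sub, sub_re, sub_im, conj_re, conj_im, I_re, I_im, smul_re, smul_im,
      smul_eq_mul]
    ring
  rw [hshift]
  calc _ ≤ ‖conj (z - x • w) * (I * w)‖ := abs_re_le_norm _
    _ = ‖z - x • w‖ * ‖w‖ := by rw [norm_mul, norm_mul, norm_I, one_mul, norm_conj]

theorem abs_re_conj_sub_mul_I_deriv_le {l : ℝ} {g g' : ℝ → ℂ} {ω : ℝ → ℝ}
    (hderiv : ∀ s, HasDerivAt g (g' s) s) (hunit : ∀ s, ‖g' s‖ = 1) (hωmono : Monotone ω)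
    (hmod : ∀ s t : ℝ, |s - t| ≤ l → ‖g' s - g' t‖ ≤ ω |s - t|) {σ s : ℝ} (hσs : σ ≤ s)
    (hsl : s - σ ≤ l) :
    |(conj (g s - g σ) * (I * g' σ)).re| ≤ ∫ u in 0..s - σ, ω u := by
  have hg' : IntervalIntegrable g' volume σ s := by
    have hmeas : Measurable g' := by
      simpa only [funext fun x => (hderiv x).deriv] using measurable_deriv g
    exact (intervalIntegrable_const (c := (1 : ℝ))).mono_fun' hmeas.aestronglyMeasurable
      (ae_of_all _ fun x => (hunit x).le)
  have hmod' : ∀ u ∈ Icc σ s, ‖g' u - g' σ‖ ≤ ω (u - σ) := fun u hu => by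
    have hu0 : 0 ≤ u - σ := sub_nonneg.2 hu.1
    simpa only [abs_of_nonneg hu0] using hmod u σ (by rw [abs_of_nonneg hu0]; linarith [hu.2])
  calc _ ≤ ‖g s - g σ - (s - σ) • g' σ‖ * ‖g' σ‖ := abs_re_conj_mul_I_mul_le _ _ _
    _ = ‖g s - g σ - (s - σ) • g' σ‖ := by rw [hunit, mul_one]
    _ ≤ ∫ u in 0..s - σ, ω u :=
      norm_sub_sub_smul_le_integral hσs (fun u _ => hderiv u) hg'
        hωmono.intervalIntegrable hmod'

theorem abs_deriv_mul_re_conj_sub_le {l L : ℝ} (hL : 0 < L) {g g' : ℝ → ℂ} {ω f : ℝ → ℝ}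
    (hderiv : ∀ s, HasDerivAt g (g' s) s) (hunit : ∀ s, ‖g' s‖ = 1) (hωmono : Monotone ω)
    (hωnonneg : ∀ x, 0 ≤ ω x) (hmod : ∀ s t : ℝ, |s - t| ≤ l → ‖g' s - g' t‖ ≤ ω |s - t|)
    (hflip : LipschitzWith (Real.toNNReal L) f) (hfmono : Monotone f)
    (hfper : ∀ t, f (t + 2 * π) = f t + l) (τ : ℝ) {t : ℝ} (ht0 : 0 ≤ t) (ht : t ≤ 2 * π) :
    |deriv f τ * (conj (g (f (t + τ)) - g (f τ)) * (I * g' (f τ))).re|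
      ≤ L ^ 2 * ∫ u in 0..t, ω (L * u) := by
  have hLc : (Real.toNNReal L : ℝ) = L := Real.coe_toNNReal L hL.le
  have hderiv_le : |deriv f τ| ≤ L := by
    simpa only [Real.norm_eq_abs, hLc] using norm_deriv_le_of_lipschitz (x₀ := τ) hflip
  have hmono : f τ ≤ f (t + τ) := hfmono (by linarith)
  have hle_l : f (t + τ) - f τ ≤ l := by
    have := hfmono (show t + τ ≤ τ + 2 * π by linarith)
    rw [hfper] at this
    linarith
  have hle_Lt : f (t + τ) - f τ ≤ L * t := by
    have := hflip.dist_le_mul (t + τ) τ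
    rw [Real.dist_eq, Real.dist_eq, hLc, add_sub_cancel_right, abs_of_nonneg ht0] at this
    exact (le_abs_self _).trans this
  have hint : 0 ≤ ∫ u in 0..t, ω (L * u) :=
    intervalIntegral.integral_nonneg ht0 fun u _ => hωnonneg _
  calc _ = |deriv f τ| * |(conj (g (f (t + τ)) - g (f τ)) * (I * g' (f τ))).re| := abs_mul _ _
    _ ≤ L * ∫ u in 0..f (t + τ) - f τ, ω u :=
      mul_le_mul hderiv_le (abs_re_conj_sub_mul_I_deriv_le hderiv hunit hωmono hmod hmono hle_l)
        (abs_nonneg _) hL.le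
    _ ≤ L * ∫ u in 0..L * t, ω u := by
      gcongr
      exact intervalIntegral.integral_mono_interval le_rfl (sub_nonneg.2 hmono) hle_Lt
        (ae_of_all _ hωnonneg) hωmono.intervalIntegrable
    _ = L ^ 2 * ∫ u in 0..t, ω (L * u) := by
      rw [intervalIntegral.integral_comp_mul_left (fun u => ω u) hL.ne', mul_zero, smul_eq_mul]
      field_simp

theorem Monotone.integrableOn_div_self_Ioc {ω : ℝ → ℝ} (hωmono : Monotone ω) {k : ℝ}
    (hk : 0 < k) (hDini : IntegrableOn (fun u => ω u / u) (Ioc 0 k)) (A : ℝ) :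
    IntegrableOn (fun u => ω u / u) (Ioc 0 A) := by
  have hfar : IntegrableOn (fun u => ω u / u) (Icc k A) := by
    simpa only [div_eq_mul_inv] using
      (hωmono.monotoneOn _).integrableOn_isCompact isCompact_Icc |>.mul_continuousOn
        (continuousOn_inv₀.mono fun u hu => (hk.trans_le hu.1).ne') isCompact_Icc
  refine (hDini.union hfar).mono_set fun u hu => ?_
  rcases le_or_gt u k with huk | hku
  · exact Or.inl ⟨hu.1, huk⟩
  · exact Or.inr ⟨hku.le, hu.2⟩

theorem Monotone.integral_le_mul {φ : ℝ → ℝ} (hmono : Monotone φ) {t : ℝ} (ht : 0 ≤ t) :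
    ∫ u in 0..t, φ u ≤ t * φ t := by
  simpa using intervalIntegral.integral_mono_on ht (hmono.intervalIntegrable (μ := volume))
    intervalIntegrable_const fun u hu => hmono hu.2

theorem Monotone.integrableOn_inv_sq_mul_primitive {φ : ℝ → ℝ} (hmono : Monotone φ)
    (hnonneg : ∀ x, 0 ≤ φ x) {a : ℝ} (hφ : IntegrableOn (fun u => φ u / u) (Ioc 0 a)) :
    IntegrableOn (fun t => 1 / t ^ 2 * ∫ u in 0..t, φ u) (Ioc 0 a) := by
  have hmeas : Measurable fun t => 1 / t ^ 2 * ∫ u in 0..t, φ u :=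
    (measurable_const.div (measurable_id.pow_const 2)).mul
      (intervalIntegral.continuous_primitive (fun _ _ => hmono.intervalIntegrable) 0).measurable
  refine hφ.mono' hmeas.aestronglyMeasurable ((ae_restrict_iff' measurableSet_Ioc).2 ?_)
  refine ae_of_all _ fun t ht => ?_
  have hint : 0 ≤ ∫ u in 0..t, φ u := intervalIntegral.integral_nonneg ht.1.le fun u _ => hnonneg u
  rw [Real.norm_eq_abs, abs_of_nonneg (by positivity)]
  calc 1 / t ^ 2 * ∫ u in 0..t, φ u ≤ 1 / t ^ 2 * (t * φ t) := by
        gcongr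
        exact hmono.integral_le_mul ht.1.le
    _ = φ t / t := by field_simp

theorem stmt_15_general (l : ℝ) (g : ℝ → ℂ) (g' : ℝ → ℂ) (ω : ℝ → ℝ)
    (hderiv : ∀ s, HasDerivAt g (g' s) s)
    (hunit : ∀ s, ‖g' s‖ = 1)
    (hωmono : Monotone ω)
    (hωnonneg : ∀ x, 0 ≤ ω x)
    (hmod : ∀ s t : ℝ, |s - t| ≤ l → ‖g' s - g' t‖ ≤ ω |s - t|)
    (hDini : ∃ k > 0, IntegrableOn (fun u => ω u / u) (Ioc 0 k))
    (f : ℝ → ℝ) (L : ℝ) (hL : 0 < L)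
    (hflip : LipschitzWith (Real.toNNReal L) f)
    (hfmono : Monotone f)
    (hfper : ∀ t, f (t + 2 * π) = f t + l) :
    (∀ᵐ τ : ℝ, ∀ t ∈ Ioc 0 π, ∀ r ∈ Ico (1/2 : ℝ) 1,
      |deriv f τ *
          ((starRingEnd ℂ) (g (f (t + τ)) - g (f τ)) * (Complex.I * g' (f τ))).re
        * (((1 - r ^ 2) / (2 * π * (1 - 2 * r * Real.cos t + r ^ 2))) / (1 - r))|
        ≤ (π * L ^ 2 / 2) * (1 / t ^ 2) * ∫ u in (0:ℝ)..t, ω (L * u)) ∧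
    IntegrableOn (fun t => (π * L ^ 2 / 2) * (1 / t ^ 2) * ∫ u in (0:ℝ)..t, ω (L * u))
      (Ioc 0 π) := by
  obtain ⟨k, hk, hkint⟩ := hDini
  have hωL : Monotone fun u => ω (L * u) := hωmono.comp fun _ _ h => by gcongr
  refine ⟨ae_of_all _ fun τ t ⟨ht0, htπ⟩ r ⟨hr, hr1⟩ => ?_, ?_⟩
  · have hint : 0 ≤ ∫ u in (0:ℝ)..t, ω (L * u) :=
      intervalIntegral.integral_nonneg ht0.le fun u _ => hωnonneg _
    rw [abs_mul]
    calc _ ≤ (L ^ 2 * ∫ u in (0:ℝ)..t, ω (L * u)) * (π / (2 * t ^ 2)) :=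
          mul_le_mul (abs_deriv_mul_re_conj_sub_le hL hderiv hunit hωmono hωnonneg hmod hflip
              hfmono hfper τ ht0.le (by linarith [Real.pi_pos]))
            (abs_poisson_div_one_sub_le ht0 htπ hr hr1) (abs_nonneg _) (by positivity)
      _ = _ := by field_simp
  · have hφ : IntegrableOn (fun u => ω (L * u) / u) (Ioc 0 π) := by
      have h := ((intervalIntegrable_iff_integrableOn_Ioc_of_le (by positivity)).2
        (hωmono.integrableOn_div_self_Ioc hk hkint (L * π))).comp_mul_left (c := L)
      rw [zero_div, mul_div_cancel_left₀ _ hL.ne'] at h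
      refine ((intervalIntegrable_iff_integrableOn_Ioc_of_le Real.pi_pos.le).1
        (h.const_mul L)).congr_fun (fun u _ => ?_) measurableSet_Ioc
      field_simp
    simpa only [mul_assoc, IntegrableOn] using
      (hωL.integrableOn_inv_sq_mul_primitive (fun _ => hωnonneg _) hφ).const_mul (π * L ^ 2 / 2)

theorem stmt_15 (l : ℝ) (hl : 0 < l) (g : ℝ → ℂ) (g' : ℝ → ℂ) (ω : ℝ → ℝ)
    (hper : ∀ s, g (s + l) = g s)
    (hderiv : ∀ s, HasDerivAt g (g' s) s)
    (hunit : ∀ s, ‖g' s‖ = 1)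
    (hωmono : Monotone ω)
    (hωnonneg : ∀ x, 0 ≤ ω x)
    (hωbdd : ∃ M, ∀ x, ω x ≤ M)
    (hmod : ∀ s t : ℝ, |s - t| ≤ l → ‖g' s - g' t‖ ≤ ω |s - t|)
    (hDini : ∃ k > 0, IntegrableOn (fun u => ω u / u) (Ioc 0 k))
    (f : ℝ → ℝ) (L : ℝ) (hL : 0 < L)
    (hflip : LipschitzWith (Real.toNNReal L) f)
    (hfmono : Monotone f)
    (hfper : ∀ t, f (t + 2 * π) = f t + l) :
    (∀ᵐ τ : ℝ, ∀ t ∈ Ioc 0 π, ∀ r ∈ Ico (1/2 : ℝ) 1,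
      |deriv f τ *
          ((starRingEnd ℂ) (g (f (t + τ)) - g (f τ)) * (Complex.I * g' (f τ))).re
        * (((1 - r ^ 2) / (2 * π * (1 - 2 * r * Real.cos t + r ^ 2))) / (1 - r))|
        ≤ (π * L ^ 2 / 2) * (1 / t ^ 2) * ∫ u in (0:ℝ)..t, ω (L * u)) ∧
    IntegrableOn (fun t => (π * L ^ 2 / 2) * (1 / t ^ 2) * ∫ u in (0:ℝ)..t, ω (L * u))
      (Ioc 0 π) :=
  stmt_15_general l g g' ω hderiv hunit hωmono hωnonneg hmod hDini f L hL hflip hfmono hfper
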